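/- For any quad-system QS_C = ⟨Q_C, R⟩, the distinguished quad unSafe (respectively unMSafe, respectively unCSafe) belongs to the safe dChase dChase^{safe}(QS_C) (respectively dChase^{msafe}(QS_C), dChase^{csafe}(QS_C)) if and only if QS_C is unsafe (respectively unmsafe, uncsafe). Hence the detection procedure is sound and complete. -/

import Mathlib

/-! ## Core formalization: quads, quad-systems, bridge rules, distributed chase,
    distributed interpretation structures, CCQ entailment and safety notions. -/

/-- A quad over elements of type `C`: context identifier, subject, predicate, object. -/
structure Quad (C : Type) where
  ctx : C
  s : C
  p : C
  o : C

/-- Terms over constants `C`, with variables indexed by naturals. -/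
inductive Term (C : Type) : Type
  | var : ℕ → Term C
  | const : C → Term C

/-- A quad pattern: a context identifier together with a triple pattern. -/
structure QuadPattern (C : Type) where
  ctx : C
  s : Term C
  p : Term C
  o : Term C

/-- Constants enriched with Skolem blank nodes: `sk i j w` is the Skolem blank node
generated by the bridge rule with identifier `i`, at its existential variable `j`,
from the instantiated frontier vector `w` (its origin vector). -/
inductive SConst (C : Type) : Type
  | base : C → SConst C
  | sk : ℕ → ℕ → List (SConst C) → SConst C

/-- Ground quads appearing in the distributed chase. -/
structure GQuad (C : Type) where
  ctx : C
  s : SConst C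
  p : SConst C
  o : SConst C

def Term.inst {C : Type} (μ : ℕ → SConst C) : Term C → SConst C
  | .var v => μ v
  | .const a => .base a

def QuadPattern.inst {C : Type} (μ : ℕ → SConst C) (q : QuadPattern C) : GQuad C :=
  ⟨q.ctx, q.s.inst μ, q.p.inst μ, q.o.inst μ⟩

/-- A forall-existential bridge rule: body and head are sets of quad patterns,
`frontier` is the vector `x⃗` of frontier variables and `exVars` the existential
variables `y⃗` of the head. -/
structure BridgeRule (C : Type) where
  id : ℕ
  body : List (QuadPattern C)
  head : List (QuadPattern C)
  frontier : List ℕ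
  exVars : Finset ℕ

def Term.varsOf {C : Type} : Term C → Finset ℕ
  | .var v => {v}
  | .const _ => ∅

def QuadPattern.varsOf {C : Type} (q : QuadPattern C) : Finset ℕ :=
  q.s.varsOf ∪ q.p.varsOf ∪ q.o.varsOf

def patsVars {C : Type} (l : List (QuadPattern C)) : Finset ℕ :=
  l.foldr (fun q s => q.varsOf ∪ s) ∅

/-- Well-formedness of a bridge rule of the form
`∀x⃗∀z⃗ (body(x⃗,z⃗) → ∃y⃗ head(x⃗,y⃗))`. -/
def BridgeRule.WF {C : Type} (r : BridgeRule C) : Prop :=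
  (∀ v ∈ patsVars r.head, v ∉ r.exVars → v ∈ r.frontier) ∧
  (∀ v ∈ r.frontier, v ∈ patsVars r.body) ∧
  (∀ v ∈ r.exVars, v ∉ patsVars r.body ∧ v ∉ r.frontier) ∧
  r.frontier.Nodup

/-- A quad-system: a quad-graph together with a set of bridge rules. -/
structure QuadSystem (C : Type) where
  quads : Set (Quad C)
  rules : Set (BridgeRule C)

/-- Well-formed quad-systems: finitely many quads and rules, well-formed bridge rules
with unique rule identifiers. -/
def QuadSystem.WF {C : Type} (QS : QuadSystem C) : Prop :=
  (∀ r ∈ QS.rules, r.WF) ∧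
  (∀ r ∈ QS.rules, ∀ r' ∈ QS.rules, r.id = r'.id → r = r') ∧
  QS.quads.Finite ∧ QS.rules.Finite

/-- Extension of an assignment mapping each existential variable of `r` to the
corresponding fresh Skolem blank node. -/
def skExt {C : Type} (r : BridgeRule C) (μ : ℕ → SConst C) : ℕ → SConst C :=
  fun v => if v ∈ r.exVars then SConst.sk r.id v (r.frontier.map μ) else μ v

def headSatisfied {C : Type} (r : BridgeRule C) (μ : ℕ → SConst C)
    (I : Set (GQuad C)) : Prop :=
  ∃ ν : ℕ → SConst C, (∀ v, v ∉ r.exVars → ν v = μ v) ∧ ∀ q ∈ r.head, q.inst ν ∈ I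

/-- `(r, μ)` is applicable on `I` iff `body(r)[μ] ⊆ I` and no extension of `μ`
satisfies the head in `I` (restricted chase). -/
def applicable {C : Type} (r : BridgeRule C) (μ : ℕ → SConst C)
    (I : Set (GQuad C)) : Prop :=
  (∀ q ∈ r.body, q.inst μ ∈ I) ∧ ¬ headSatisfied r μ I

/-- The result of applying assignment `μ` to bridge rule `r`. -/
def applyRule {C : Type} (r : BridgeRule C) (μ : ℕ → SConst C) : Set (GQuad C) :=
  {q | ∃ h ∈ r.head, q = h.inst (skExt r μ)}

def Quad.toGQuad {C : Type} (q : Quad C) : GQuad C :=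
  ⟨q.ctx, .base q.s, .base q.p, .base q.o⟩

/-- One iteration of the distributed chase. -/
def chaseStep {C : Type} (QS : QuadSystem C) (I : Set (GQuad C)) : Set (GQuad C) :=
  I ∪ {q | ∃ r ∈ QS.rules, ∃ μ : ℕ → SConst C, applicable r μ I ∧ q ∈ applyRule r μ}

/-- The state of the distributed chase after `n` iterations. -/
def dChaseAt {C : Type} (QS : QuadSystem C) : ℕ → Set (GQuad C)
  | 0 => Quad.toGQuad '' QS.quads
  | n + 1 => chaseStep QS (dChaseAt QS n)

/-- The distributed chase of a quad-system. -/
def dChase {C : Type} (QS : QuadSystem C) : Set (GQuad C) :=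
  ⋃ n, dChaseAt QS n

/-! ### Distributed interpretation structures and entailment -/

/-- A distributed interpretation structure: a common domain, a rigid interpretation of
constants, and for each context a set of triples holding in it. -/
structure Interp (C : Type) where
  Dom : Type
  constInt : C → Dom
  holds : C → Dom → Dom → Dom → Prop

def Term.eval {C : Type} (I : Interp C) (σ : ℕ → I.Dom) : Term C → I.Dom
  | .var v => σ v
  | .const a => I.constInt a

def Interp.satQP {C : Type} (I : Interp C) (σ : ℕ → I.Dom) (q : QuadPattern C) : Prop :=
  I.holds q.ctx (q.s.eval I σ) (q.p.eval I σ) (q.o.eval I σ)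

def Interp.satQuad {C : Type} (I : Interp C) (q : Quad C) : Prop :=
  I.holds q.ctx (I.constInt q.s) (I.constInt q.p) (I.constInt q.o)

def Interp.satRule {C : Type} (I : Interp C) (r : BridgeRule C) : Prop :=
  ∀ σ : ℕ → I.Dom, (∀ q ∈ r.body, I.satQP σ q) →
    ∃ σ' : ℕ → I.Dom, (∀ v, v ∉ r.exVars → σ' v = σ v) ∧ ∀ q ∈ r.head, I.satQP σ' q

def Interp.isModel {C : Type} (I : Interp C) (QS : QuadSystem C) : Prop :=
  (∀ q ∈ QS.quads, I.satQuad q) ∧ ∀ r ∈ QS.rules, I.satRule r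

def QuadSystem.Consistent {C : Type} (QS : QuadSystem C) : Prop :=
  ∃ I : Interp C, I.isModel QS

/-- A (boolean) contextualized conjunctive query: a conjunction of quad patterns,
all of whose variables are existentially quantified. -/
abbrev CCQ (C : Type) : Type := List (QuadPattern C)

def Interp.satCCQ {C : Type} (I : Interp C) (Q : CCQ C) : Prop :=
  ∃ σ : ℕ → I.Dom, ∀ q ∈ Q, I.satQP σ q

/-- CCQ entailment: every model of the quad-system satisfies the query. -/
def entailsCCQ {C : Type} (QS : QuadSystem C) (Q : CCQ C) : Prop :=
  ∀ I : Interp C, I.isModel QS → I.satCCQ Q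

/-! ### Skolem blank nodes: descendants, origin rule ids, origin vectors,
origin contexts, and the safety notions -/

def SConst.isSk {C : Type} : SConst C → Prop
  | .sk _ _ _ => True
  | .base _ => False

/-- `childOf k b`: `k` is a child of the Skolem blank node `b`,
i.e. `k` occurs in the origin vector of `b`. -/
def childOf {C : Type} (k b : SConst C) : Prop :=
  ∃ i j w, b = SConst.sk i j w ∧ k ∈ w

/-- `descOf k b`: `k` is a descendant of `b` (transitive closure of `childOf`). -/
def descOf {C : Type} : SConst C → SConst C → Prop :=
  Relation.TransGen childOf

def occursIn {C : Type} (b : SConst C) (q : GQuad C) : Prop :=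
  q.s = b ∨ q.p = b ∨ q.o = b

def inChase {C : Type} (QS : QuadSystem C) (b : SConst C) : Prop :=
  ∃ q ∈ dChase QS, occursIn b q

def appearsAt {C : Type} (QS : QuadSystem C) (b : SConst C) (n : ℕ) : Prop :=
  ∃ q ∈ dChaseAt QS n, occursIn b q

/-- The origin contexts of a constant: the contexts in which triples containing it
are first generated during the chase construction. -/
def originContexts {C : Type} (QS : QuadSystem C) (b : SConst C) : Set C :=
  {c | ∃ n, (∀ m, m < n → ¬ appearsAt QS b m) ∧
        ∃ q ∈ dChaseAt QS n, occursIn b q ∧ q.ctx = c}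

/-- Isomorphism of two vectors of constants: a bijective renaming of blank nodes
(fixing all non-blank constants) carrying one to the other. -/
def VecIso {C : Type} (v w : List (SConst C)) : Prop :=
  ∃ g : SConst C → SConst C, w = v.map g ∧ (∀ x : SConst C, ¬ x.isSk → g x = x) ∧
    Set.InjOn g {x | x ∈ v ∧ x.isSk}

/-- A quad-system is unsafe iff its dChase contains two distinct Skolem blank nodes,
one a descendant of the other, with the same origin rule id and isomorphic
origin vectors. -/
def QuadSystem.Unsafe {C : Type} (QS : QuadSystem C) : Prop :=
  ∃ i j w j' w', inChase QS (SConst.sk i j w) ∧ inChase QS (SConst.sk i j' w') ∧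
    SConst.sk i j w ≠ SConst.sk i j' w' ∧
    descOf (SConst.sk i j w) (SConst.sk i j' w') ∧ VecIso w w'

def QuadSystem.Safe {C : Type} (QS : QuadSystem C) : Prop := ¬ QS.Unsafe

/-- A quad-system is unmsafe iff its dChase contains two distinct Skolem blank nodes,
one a descendant of the other, with the same origin rule id. -/
def QuadSystem.Unmsafe {C : Type} (QS : QuadSystem C) : Prop :=
  ∃ i j w j' w', inChase QS (SConst.sk i j w) ∧ inChase QS (SConst.sk i j' w') ∧
    SConst.sk i j w ≠ SConst.sk i j' w' ∧
    descOf (SConst.sk i j w) (SConst.sk i j' w')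

def QuadSystem.Msafe {C : Type} (QS : QuadSystem C) : Prop := ¬ QS.Unmsafe

/-- A quad-system is uncsafe iff its dChase contains two distinct Skolem blank nodes,
one a descendant of the other, with the same origin contexts. -/
def QuadSystem.Uncsafe {C : Type} (QS : QuadSystem C) : Prop :=
  ∃ b b' : SConst C, b.isSk ∧ b'.isSk ∧ b ≠ b' ∧ inChase QS b ∧ inChase QS b' ∧
    descOf b b' ∧ originContexts QS b = originContexts QS b'

def QuadSystem.Csafe {C : Type} (QS : QuadSystem C) : Prop := ¬ QS.Uncsafe
/-! ### The safety / msafety / csafety tests of the detection procedure -/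

/-- `unSafeTest r μ`: the application of `μ` to `r` would create a fresh Skolem blank
node one of whose children `b` (a constant of the instantiated frontier) has a
(reflexive-transitive) descendant `b'` generated by the same bridge rule with an
isomorphic origin vector. -/
def unSafeTest {C : Type} (r : BridgeRule C) (μ : ℕ → SConst C) : Prop :=
  ∃ b b' : SConst C, b ∈ r.frontier.map μ ∧ (b' = b ∨ descOf b' b) ∧
    ∃ j w, b' = SConst.sk r.id j w ∧ VecIso w (r.frontier.map μ)

/-- `unMSafeTest r μ`: as `unSafeTest`, but only requiring the same origin rule id. -/
def unMSafeTest {C : Type} (r : BridgeRule C) (μ : ℕ → SConst C) : Prop :=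
  ∃ b b' : SConst C, b ∈ r.frontier.map μ ∧ (b' = b ∨ descOf b' b) ∧
    ∃ j w, b' = SConst.sk r.id j w

/-- The context scope of a variable in a set of quad patterns. -/
def cScope {C : Type} (v : ℕ) (l : List (QuadPattern C)) : Set C :=
  {c | ∃ q ∈ l, q.ctx = c ∧ (q.s = Term.var v ∨ q.p = Term.var v ∨ q.o = Term.var v)}

/-- `unCSafeTest QS r μ`: the application of `μ` to `r` would create, for some
existential variable `y_j` of `r`, a fresh Skolem blank node (whose origin contexts
are `cScope y_j (head r)`) one of whose children `b` has a (reflexive-transitive)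
descendant Skolem blank node `b'` with the same origin contexts. -/
def unCSafeTest {C : Type} (QS : QuadSystem C) (r : BridgeRule C)
    (μ : ℕ → SConst C) : Prop :=
  ∃ b b' : SConst C, ∃ yj ∈ r.exVars, b ∈ r.frontier.map μ ∧ (b' = b ∨ descOf b' b) ∧
    b'.isSk ∧ originContexts QS b' = cScope yj r.head

/-- The distinguished quad `unSafe` is generated in the safe dChase iff the safety
test fires for some applicable (rule, assignment) pair at some chase iteration. -/
def unsafeDetected {C : Type} (QS : QuadSystem C) : Prop :=
  ∃ n : ℕ, ∃ r ∈ QS.rules, ∃ μ : ℕ → SConst C,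
    applicable r μ (dChaseAt QS n) ∧ unSafeTest r μ

def unmsafeDetected {C : Type} (QS : QuadSystem C) : Prop :=
  ∃ n : ℕ, ∃ r ∈ QS.rules, ∃ μ : ℕ → SConst C,
    applicable r μ (dChaseAt QS n) ∧ unMSafeTest r μ

def uncsafeDetected {C : Type} (QS : QuadSystem C) : Prop :=
  ∃ n : ℕ, ∃ r ∈ QS.rules, ∃ μ : ℕ → SConst C,
    applicable r μ (dChaseAt QS n) ∧ unCSafeTest QS r μ

/-!
Every Skolem blank node `sk i j w` of the chase was created by one application of the unique
rule `r` with `r.id = i`, under an assignment `μ` with `w = r.frontier.map μ`; since the chase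
is restricted, that application creates it for the first time, so its origin contexts are the
context scope of `j` in the head of `r`. Hence, when a test fires on an applicable `(r, μ)`, the
blank node `b'` it finds is a descendant of the node `sk r.id j (r.frontier.map μ)` about to be
created, and the two witness unsafety; conversely, if `b` descends from `b' = sk i j' w'`, the
test fires at the application creating `b'`, with `b` below a child of `b'`.
-/

section

variable {C : Type}

def QuadPattern.HasVar (q : QuadPattern C) (v : ℕ) : Prop :=
  q.s = .var v ∨ q.p = .var v ∨ q.o = .var v

theorem Term.mem_varsOf {t : Term C} {v : ℕ} : v ∈ t.varsOf ↔ t = .var v := by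
  cases t <;> simp [Term.varsOf, eq_comm]

theorem QuadPattern.mem_varsOf {q : QuadPattern C} {v : ℕ} : v ∈ q.varsOf ↔ q.HasVar v := by
  simp [QuadPattern.varsOf, QuadPattern.HasVar, Term.mem_varsOf]

theorem mem_patsVars {l : List (QuadPattern C)} {v : ℕ} :
    v ∈ patsVars l ↔ ∃ q ∈ l, q.HasVar v := by
  induction l with
  | nil => simp [patsVars]
  | cons q l ih =>
    rw [show patsVars (q :: l) = q.varsOf ∪ patsVars l from rfl]
    simp [ih, QuadPattern.mem_varsOf]

theorem QuadPattern.inst_congr {q : QuadPattern C} {ν ν' : ℕ → SConst C}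
    (h : ∀ v, q.HasVar v → ν v = ν' v) : q.inst ν = q.inst ν' := by
  have key : ∀ t : Term C, (∀ v, t = .var v → ν v = ν' v) → t.inst ν = t.inst ν' := by
    rintro (v | a) ht
    exacts [ht v rfl, rfl]
  simp only [QuadPattern.inst, key q.s fun v hv => h v (.inl hv),
    key q.p fun v hv => h v (.inr (.inl hv)), key q.o fun v hv => h v (.inr (.inr hv))]

theorem occursIn_inst_of_hasVar {q : QuadPattern C} {v : ℕ} (ν : ℕ → SConst C)
    (h : q.HasVar v) : occursIn (ν v) (q.inst ν) := by
  rcases h with h | h | h <;> simp [occursIn, QuadPattern.inst, Term.inst, h]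

theorem exists_hasVar_of_occursIn_inst {q : QuadPattern C} {ν : ℕ → SConst C} {i j : ℕ}
    {w : List (SConst C)} (h : occursIn (.sk i j w) (q.inst ν)) :
    ∃ v, q.HasVar v ∧ ν v = .sk i j w := by
  have key : ∀ t : Term C, t.inst ν = .sk i j w → ∃ v, t = .var v ∧ ν v = .sk i j w := by
    rintro (v | a) ht
    exacts [⟨v, rfl, ht⟩, nomatch ht]
  rcases h with h | h | h
  · obtain ⟨v, hv, e⟩ := key _ h; exact ⟨v, .inl hv, e⟩
  · obtain ⟨v, hv, e⟩ := key _ h; exact ⟨v, .inr (.inl hv), e⟩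
  · obtain ⟨v, hv, e⟩ := key _ h; exact ⟨v, .inr (.inr hv), e⟩

theorem skExt_of_mem_exVars {r : BridgeRule C} (μ : ℕ → SConst C) {j : ℕ}
    (hj : j ∈ r.exVars) : skExt r μ j = .sk r.id j (r.frontier.map μ) :=
  if_pos hj

theorem head_inst_skExt_congr {r : BridgeRule C} (hr : r.WF) {μ μ' : ℕ → SConst C}
    (hμ : r.frontier.map μ = r.frontier.map μ') {h : QuadPattern C} (hh : h ∈ r.head) :
    h.inst (skExt r μ) = h.inst (skExt r μ') := by
  refine QuadPattern.inst_congr fun v hv => ?_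
  by_cases hex : v ∈ r.exVars
  · simp only [skExt_of_mem_exVars _ hex, hμ]
  · simp only [skExt, if_neg hex]
    exact List.map_eq_map_iff.mp hμ v (hr.1 v (mem_patsVars.2 ⟨h, hh, hv⟩) hex)

theorem childOf_sizeOf_lt {k b : SConst C} (h : childOf k b) : sizeOf k < sizeOf b := by
  obtain ⟨i, j, w, rfl, hk⟩ := h
  have := List.sizeOf_lt_of_mem hk
  simp only [SConst.sk.sizeOf_spec]
  omega

theorem descOf_irrefl (b : SConst C) : ¬ descOf b b := by
  suffices ∀ {k}, descOf k b → sizeOf k < sizeOf b from fun h => (this h).false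
  intro k h
  induction h with
  | single h => exact childOf_sizeOf_lt h
  | tail _ h ih => exact ih.trans (childOf_sizeOf_lt h)

theorem descOf_sk_iff {b : SConst C} {i j : ℕ} {w : List (SConst C)} :
    descOf b (.sk i j w) ↔ ∃ c ∈ w, b = c ∨ descOf b c := by
  rw [descOf, Relation.TransGen.tail'_iff]
  constructor
  · rintro ⟨c, hbc, _, _, _, he, hc⟩
    obtain ⟨-, -, rfl⟩ := SConst.sk.inj he
    exact ⟨c, hc, (Relation.reflTransGen_iff_eq_or_transGen.1 hbc).imp_left Eq.symm⟩
  · rintro ⟨c, hc, hbc⟩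
    exact ⟨c, Relation.reflTransGen_iff_eq_or_transGen.2 (hbc.imp_left Eq.symm), i, j, w, rfl, hc⟩

namespace QuadSystem

variable {QS : QuadSystem C}

theorem dChaseAt_mono : Monotone (dChaseAt QS) :=
  monotone_nat_of_le_succ fun _ => Set.subset_union_left

theorem inChase_iff_exists_appearsAt {b : SConst C} : inChase QS b ↔ ∃ n, appearsAt QS b n := by
  simp only [inChase, appearsAt, dChase, Set.mem_iUnion]
  exact ⟨fun ⟨q, ⟨n, hq⟩, hb⟩ => ⟨n, q, hq, hb⟩, fun ⟨n, q, hq, hb⟩ => ⟨q, ⟨n, hq⟩, hb⟩⟩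

theorem appearsAt_of_mem_frontier {r : BridgeRule C} (hr : r.WF) {μ : ℕ → SConst C} {n : ℕ}
    (happ : applicable r μ (dChaseAt QS n)) {v : ℕ} (hv : v ∈ r.frontier) :
    appearsAt QS (μ v) n := by
  obtain ⟨q, hq, hqv⟩ := mem_patsVars.1 (hr.2.1 v hv)
  exact ⟨_, happ.1 q hq, occursIn_inst_of_hasVar μ hqv⟩

theorem appearsAt_skolem_succ {r : BridgeRule C} (hr : r ∈ QS.rules) {μ : ℕ → SConst C}
    {n : ℕ} (happ : applicable r μ (dChaseAt QS n)) {j : ℕ} (hj : j ∈ r.exVars)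
    {h : QuadPattern C} (hh : h ∈ r.head) (hhj : h.HasVar j) :
    appearsAt QS (.sk r.id j (r.frontier.map μ)) (n + 1) := by
  refine ⟨_, Or.inr ⟨r, hr, μ, happ, h, hh, rfl⟩, ?_⟩
  simpa only [skExt_of_mem_exVars μ hj] using occursIn_inst_of_hasVar (skExt r μ) hhj

theorem skolem_or_appearsAt_of_occursIn_head {r : BridgeRule C} (hr : r.WF)
    {μ : ℕ → SConst C} {n : ℕ} (happ : applicable r μ (dChaseAt QS n)) {h : QuadPattern C}
    (hh : h ∈ r.head) {i j : ℕ} {w : List (SConst C)}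
    (hocc : occursIn (.sk i j w) (h.inst (skExt r μ))) :
    (r.id = i ∧ j ∈ r.exVars ∧ w = r.frontier.map μ ∧ h.HasVar j) ∨
      appearsAt QS (.sk i j w) n := by
  obtain ⟨v, hv, he⟩ := exists_hasVar_of_occursIn_inst hocc
  by_cases hex : v ∈ r.exVars
  · rw [skExt_of_mem_exVars μ hex, SConst.sk.injEq] at he
    obtain ⟨rfl, rfl, rfl⟩ := he
    exact .inl ⟨rfl, hex, rfl, hv⟩
  · rw [skExt, if_neg hex] at he
    exact .inr (he ▸ appearsAt_of_mem_frontier hr happ (hr.1 v (mem_patsVars.2 ⟨h, hh, hv⟩) hex))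

theorem exists_applicable_of_appearsAt_sk (hR : ∀ r ∈ QS.rules, r.WF) {n i j : ℕ}
    {w : List (SConst C)} (hn : appearsAt QS (.sk i j w) n) :
    ∃ r ∈ QS.rules, ∃ μ : ℕ → SConst C, ∃ m < n, applicable r μ (dChaseAt QS m) ∧
      r.id = i ∧ j ∈ r.exVars ∧ w = r.frontier.map μ ∧ ∃ h ∈ r.head, h.HasVar j := by
  induction n with
  | zero =>
    obtain ⟨_, ⟨q, -, rfl⟩, hocc⟩ := hn
    rcases hocc with h | h | h <;> nomatch h
  | succ n ih =>
    obtain ⟨q, hq | ⟨r, hr, μ, happ, h, hh, rfl⟩, hocc⟩ := hn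
    · obtain ⟨r, hr, μ, m, hm, rest⟩ := ih ⟨q, hq, hocc⟩
      exact ⟨r, hr, μ, m, hm.trans n.lt_succ_self, rest⟩
    · rcases skolem_or_appearsAt_of_occursIn_head (hR r hr) happ hh hocc with
        ⟨hi, hj, hw, hhj⟩ | hn
      · exact ⟨r, hr, μ, n, n.lt_succ_self, happ, hi, hj, hw, h, hh, hhj⟩
      · obtain ⟨r, hr, μ, m, hm, rest⟩ := ih hn
        exact ⟨r, hr, μ, m, hm.trans n.lt_succ_self, rest⟩

theorem inChase_of_childOf (hR : ∀ r ∈ QS.rules, r.WF) {k b : SConst C} (h : childOf k b)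
    (hb : inChase QS b) : inChase QS k := by
  obtain ⟨i, j, w, rfl, hk⟩ := h
  obtain ⟨n, hn⟩ := inChase_iff_exists_appearsAt.1 hb
  obtain ⟨r, hr, μ, m, -, happ, -, -, rfl, -⟩ := exists_applicable_of_appearsAt_sk hR hn
  obtain ⟨v, hv, rfl⟩ := List.mem_map.1 hk
  exact inChase_iff_exists_appearsAt.2 ⟨m, appearsAt_of_mem_frontier (hR r hr) happ hv⟩

theorem inChase_of_descOf (hR : ∀ r ∈ QS.rules, r.WF) {k b : SConst C} (h : descOf k b)
    (hb : inChase QS b) : inChase QS k := by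
  induction h with
  | single h => exact inChase_of_childOf hR h hb
  | tail _ h ih => exact ih (inChase_of_childOf hR h hb)

theorem inChase_of_descOf_frontier (hR : ∀ r ∈ QS.rules, r.WF) {r : BridgeRule C}
    (hr : r ∈ QS.rules) {μ : ℕ → SConst C} {n : ℕ} (happ : applicable r μ (dChaseAt QS n))
    {b b' : SConst C} (hb : b ∈ r.frontier.map μ) (hb' : b' = b ∨ descOf b' b) :
    inChase QS b' := by
  obtain ⟨v, hv, rfl⟩ := List.mem_map.1 hb
  have hin := inChase_iff_exists_appearsAt.2 ⟨n, appearsAt_of_mem_frontier (hR r hr) happ hv⟩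
  rcases hb' with rfl | hd
  exacts [hin, inChase_of_descOf hR hd hin]

theorem mem_exVars_of_inChase_sk (hwf : QS.WF) {r : BridgeRule C} (hr : r ∈ QS.rules) {j : ℕ}
    {w : List (SConst C)} (hin : inChase QS (.sk r.id j w)) :
    j ∈ r.exVars ∧ ∃ h ∈ r.head, h.HasVar j := by
  obtain ⟨n, hn⟩ := inChase_iff_exists_appearsAt.1 hin
  obtain ⟨r', hr', -, -, -, -, hid, hj, -, hhj⟩ := exists_applicable_of_appearsAt_sk hwf.1 hn
  obtain rfl : r = r' := (hwf.2.1 r' hr' r hr hid).symm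
  exact ⟨hj, hhj⟩

-- The chase is restricted: a second application of `r` with the same frontier values is blocked.
theorem not_appearsAt_skolem (hwf : QS.WF) {r : BridgeRule C} (hr : r ∈ QS.rules)
    {μ : ℕ → SConst C} {n : ℕ} (happ : applicable r μ (dChaseAt QS n)) {m j : ℕ} (hmn : m ≤ n) :
    ¬ appearsAt QS (.sk r.id j (r.frontier.map μ)) m := by
  rintro ⟨q, hq, hocc⟩
  obtain ⟨r', hr', μ', m', hm', happ', hid, -, hμ, -⟩ :=
    exists_applicable_of_appearsAt_sk hwf.1 ⟨q, dChaseAt_mono hmn hq, hocc⟩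
  obtain rfl : r = r' := (hwf.2.1 r' hr' r hr hid).symm
  refine happ.2 ⟨skExt r μ, fun v hv => if_neg hv, fun h hh => ?_⟩
  rw [head_inst_skExt_congr (hwf.1 r hr) hμ hh]
  exact dChaseAt_mono hm' (Or.inr ⟨r, hr, μ', happ', h, hh, rfl⟩)

theorem originContexts_eq_of_first_appearsAt {b : SConst C} {N : ℕ}
    (hfirst : ∀ m < N, ¬ appearsAt QS b m) (hN : appearsAt QS b N) :
    originContexts QS b = {c | ∃ q ∈ dChaseAt QS N, occursIn b q ∧ q.ctx = c} := by
  ext c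
  constructor
  · rintro ⟨N', hmin, q, hq, hocc, rfl⟩
    obtain rfl : N' = N :=
      le_antisymm (not_lt.1 fun h => hmin N h hN) (not_lt.1 fun h => hfirst N' h ⟨q, hq, hocc⟩)
    exact ⟨q, hq, hocc, rfl⟩
  · exact fun hc => ⟨N, hfirst, hc⟩

theorem originContexts_nonempty {b : SConst C} (hb : inChase QS b) :
    (originContexts QS b).Nonempty := by
  classical
  have hex := inChase_iff_exists_appearsAt.1 hb
  obtain ⟨q, hq, hocc⟩ := Nat.find_spec hex
  exact ⟨q.ctx, Nat.find hex, fun m hm => Nat.find_min hex hm, q, hq, hocc, rfl⟩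

theorem originContexts_skolem (hwf : QS.WF) {r : BridgeRule C} (hr : r ∈ QS.rules)
    {μ : ℕ → SConst C} {n : ℕ} (happ : applicable r μ (dChaseAt QS n)) {j : ℕ}
    (hj : j ∈ r.exVars) (hhead : ∃ h ∈ r.head, h.HasVar j) :
    originContexts QS (.sk r.id j (r.frontier.map μ)) = cScope j r.head := by
  have hfresh := fun m => not_appearsAt_skolem (j := j) hwf hr happ (m := m)
  obtain ⟨h₀, hh₀, hh₀j⟩ := hhead
  rw [originContexts_eq_of_first_appearsAt (fun m hm => hfresh m (Nat.lt_succ_iff.1 hm))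
    (appearsAt_skolem_succ hr happ hj hh₀ hh₀j)]
  ext c
  constructor
  · rintro ⟨q, hq | ⟨r', hr', μ', happ', h, hh, rfl⟩, hocc, rfl⟩
    · exact absurd ⟨q, hq, hocc⟩ (hfresh n le_rfl)
    · rcases skolem_or_appearsAt_of_occursIn_head (hwf.1 r' hr') happ' hh hocc with
        ⟨hid, -, -, hhj⟩ | hn
      · obtain rfl : r = r' := (hwf.2.1 r' hr' r hr hid).symm
        exact ⟨h, hh, rfl, hhj⟩
      · exact absurd hn (hfresh n le_rfl)
  · rintro ⟨h, hh, rfl, hhj⟩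
    refine ⟨_, Or.inr ⟨r, hr, μ, happ, h, hh, rfl⟩, ?_, rfl⟩
    simpa only [skExt_of_mem_exVars μ hj] using occursIn_inst_of_hasVar (skExt r μ) hhj

/-- Detection and unsafety for any condition `R` on the origin vectors of two blank nodes with
the same origin rule id: `VecIso` gives the safe case, the trivial condition the msafe case. -/
theorem sameRuleId_detected_iff (hwf : QS.WF) (R : List (SConst C) → List (SConst C) → Prop) :
    (∃ n, ∃ r ∈ QS.rules, ∃ μ : ℕ → SConst C, applicable r μ (dChaseAt QS n) ∧
      ∃ b b' : SConst C, b ∈ r.frontier.map μ ∧ (b' = b ∨ descOf b' b) ∧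
        ∃ j w, b' = .sk r.id j w ∧ R w (r.frontier.map μ)) ↔
    ∃ i j w j' w', inChase QS (.sk i j w) ∧ inChase QS (.sk i j' w') ∧
      SConst.sk i j w ≠ .sk i j' w' ∧ descOf (.sk i j w) (.sk i j' w') ∧ R w w' := by
  constructor
  · rintro ⟨n, r, hr, μ, happ, b, _, hb, hb', j, w, rfl, hRw⟩
    have hin := inChase_of_descOf_frontier hwf.1 hr happ hb hb'
    obtain ⟨hj, h, hh, hhj⟩ := mem_exVars_of_inChase_sk hwf hr hin
    have hdesc : descOf (.sk r.id j w) (.sk r.id j (r.frontier.map μ)) :=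
      descOf_sk_iff.2 ⟨b, hb, hb'⟩
    exact ⟨r.id, j, w, j, _, hin,
      inChase_iff_exists_appearsAt.2 ⟨n + 1, appearsAt_skolem_succ hr happ hj hh hhj⟩,
      fun e => descOf_irrefl _ (e ▸ hdesc), hdesc, hRw⟩
  · rintro ⟨i, j, w, j', w', -, hin', -, hdesc, hRw⟩
    obtain ⟨n, hn⟩ := inChase_iff_exists_appearsAt.1 hin'
    obtain ⟨r, hr, μ, m, -, happ, rfl, -, rfl, -⟩ := exists_applicable_of_appearsAt_sk hwf.1 hn
    obtain ⟨b, hb, hb'⟩ := descOf_sk_iff.1 hdesc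
    exact ⟨m, r, hr, μ, happ, b, _, hb, hb', j, w, rfl, hRw⟩

theorem uncsafeDetected_iff (hwf : QS.WF) : uncsafeDetected QS ↔ QS.Uncsafe := by
  constructor
  · rintro ⟨n, r, hr, μ, happ, b, b', j, hj, hb, hb', hsk, hctx⟩
    have hin := inChase_of_descOf_frontier hwf.1 hr happ hb hb'
    obtain ⟨c, h, hh, -, hhj⟩ := hctx ▸ originContexts_nonempty hin
    have hdesc : descOf b' (.sk r.id j (r.frontier.map μ)) := descOf_sk_iff.2 ⟨b, hb, hb'⟩
    exact ⟨b', .sk r.id j (r.frontier.map μ), hsk, trivial, fun e => descOf_irrefl _ (e ▸ hdesc), hin,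
      inChase_iff_exists_appearsAt.2 ⟨n + 1, appearsAt_skolem_succ hr happ hj hh hhj⟩, hdesc,
      hctx.trans (originContexts_skolem hwf hr happ hj ⟨h, hh, hhj⟩).symm⟩
  · rintro ⟨b, _ | ⟨i, j, w⟩, hsk, hsk', -, -, hin', hdesc, hctx⟩
    · exact hsk'.elim
    obtain ⟨n, hn⟩ := inChase_iff_exists_appearsAt.1 hin'
    obtain ⟨r, hr, μ, m, -, happ, rfl, hj, rfl, hhead⟩ :=
      exists_applicable_of_appearsAt_sk hwf.1 hn
    obtain ⟨c, hc, hbc⟩ := descOf_sk_iff.1 hdesc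
    exact ⟨m, r, hr, μ, happ, c, b, j, hj, hc, hbc, hsk,
      hctx.trans (originContexts_skolem hwf hr happ hj hhead)⟩

end QuadSystem

end

open QuadSystem in
theorem detection_procedure_sound_and_complete {C : Type} (QS : QuadSystem C)
    (hwf : QS.WF) :
    (unsafeDetected QS ↔ QS.Unsafe) ∧
    (unmsafeDetected QS ↔ QS.Unmsafe) ∧
    (uncsafeDetected QS ↔ QS.Uncsafe) :=
  ⟨sameRuleId_detected_iff hwf VecIso,
    by simpa only [unmsafeDetected, unMSafeTest, Unmsafe, and_true] using sameRuleId_detected_iff hwf fun _ _ => True,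
    uncsafeDetected_iff hwf⟩
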